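/- (Lemma 3, rank upper bound.) Suppose the full-horizon KKT conditions hold for some ω ∈ ℝ^r with ω ≠ 0 and some costates λ ∈ (ℝ^n)^T. Then for every window 1 ≤ t ≤ t+l−1 ≤ T, rank H(t,l) ≤ r+n−1. -/

import Mathlib

/-!
On a window the KKT conditions read `F_x x = Φ_x ω + V μ` and `F_u x + Φ_u ω = 0`, where
`x = (λ_t, …, λ_{t+l-1})` and `μ = λ_{t+l}`, or `μ = 0` when the window ends at the horizon.
Since `F_x` is block unitriangular, eliminating `x` gives `H (ω, μ) = 0`; this kernel vector is
nonzero because `ω ≠ 0`, so rank–nullity bounds the rank of `H` by `r + n - 1`.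
-/

open Matrix

noncomputable section

variable {n m r : ℕ}

/-- Block upper bidiagonal matrix `F_x(t,l)` (0-based block indices): diagonal blocks are
`I_n`, and block `(i, i+1)` is `-(A (t+i))ᵀ`. -/
def Fx (A : ℕ → Matrix (Fin n) (Fin n) ℝ) (t l : ℕ) :
    Matrix (Fin l × Fin n) (Fin l × Fin n) ℝ :=
  fun ip jq =>
    if ip.1 = jq.1 then (if ip.2 = jq.2 then (1 : ℝ) else 0)
    else if (jq.1 : ℕ) = (ip.1 : ℕ) + 1 then -((A (t + (ip.1 : ℕ)))ᵀ ip.2 jq.2)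
    else 0

/-- Block diagonal matrix `F_u(t,l)` with diagonal blocks `(B (t+i))ᵀ`. -/
def Fu (B : ℕ → Matrix (Fin n) (Fin m) ℝ) (t l : ℕ) :
    Matrix (Fin l × Fin m) (Fin l × Fin n) ℝ :=
  fun ip jq => if ip.1 = jq.1 then (B (t + (ip.1 : ℕ)))ᵀ ip.2 jq.2 else 0

/-- Vertical stack `Φ_x(t,l)` of the blocks `(G (t+i))ᵀ`. -/
def Phix (G : ℕ → Matrix (Fin r) (Fin n) ℝ) (t l : ℕ) :
    Matrix (Fin l × Fin n) (Fin r) ℝ :=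
  fun ip q => (G (t + (ip.1 : ℕ)))ᵀ ip.2 q

/-- Vertical stack `Φ_u(t,l)` of the blocks `(D (t+i))ᵀ`. -/
def Phiu (D : ℕ → Matrix (Fin r) (Fin m) ℝ) (t l : ℕ) :
    Matrix (Fin l × Fin m) (Fin r) ℝ :=
  fun ip q => (D (t + (ip.1 : ℕ)))ᵀ ip.2 q

/-- `V(t,l)`: all `n×n` blocks zero except the last one, which is `(A (t+l-1))ᵀ`. -/
def Vm (A : ℕ → Matrix (Fin n) (Fin n) ℝ) (t l : ℕ) :
    Matrix (Fin l × Fin n) (Fin n) ℝ :=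
  fun ip q => if (ip.1 : ℕ) = l - 1 then (A (t + l - 1))ᵀ ip.2 q else 0

/-- `H₁(t,l) = F_u(t,l) · F_x(t,l)⁻¹ · Φ_x(t,l) + Φ_u(t,l)`. -/
def H1m (A : ℕ → Matrix (Fin n) (Fin n) ℝ) (B : ℕ → Matrix (Fin n) (Fin m) ℝ)
    (G : ℕ → Matrix (Fin r) (Fin n) ℝ) (D : ℕ → Matrix (Fin r) (Fin m) ℝ) (t l : ℕ) :
    Matrix (Fin l × Fin m) (Fin r) ℝ :=
  Fu B t l * (Fx A t l)⁻¹ * Phix G t l + Phiu D t l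

/-- `H₂(t,l) = F_u(t,l) · F_x(t,l)⁻¹ · V(t,l)`. -/
def H2m (A : ℕ → Matrix (Fin n) (Fin n) ℝ) (B : ℕ → Matrix (Fin n) (Fin m) ℝ) (t l : ℕ) :
    Matrix (Fin l × Fin m) (Fin n) ℝ :=
  Fu B t l * (Fx A t l)⁻¹ * Vm A t l

/-- The recovery matrix `H(t,l) = [H₁(t,l)  H₂(t,l)]`. -/
def Hm (A : ℕ → Matrix (Fin n) (Fin n) ℝ) (B : ℕ → Matrix (Fin n) (Fin m) ℝ)
    (G : ℕ → Matrix (Fin r) (Fin n) ℝ) (D : ℕ → Matrix (Fin r) (Fin m) ℝ) (t l : ℕ) :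
    Matrix (Fin l × Fin m) (Fin r ⊕ Fin n) ℝ :=
  fromCols (H1m A B G D t l) (H2m A B t l)

/-- Stack the vectors `lam t, lam (t+1), …, lam (t+l-1)` into a vector in `ℝ^{nl}`. -/
def stackVec (lam : ℕ → Fin n → ℝ) (t l : ℕ) : Fin l × Fin n → ℝ :=
  fun ip => lam (t + (ip.1 : ℕ)) ip.2

/-- Full-horizon KKT conditions for the weight vector `ω` with costates `lam 1, …, lam T`. -/
def KKT (A : ℕ → Matrix (Fin n) (Fin n) ℝ) (B : ℕ → Matrix (Fin n) (Fin m) ℝ)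
    (G : ℕ → Matrix (Fin r) (Fin n) ℝ) (D : ℕ → Matrix (Fin r) (Fin m) ℝ) (T : ℕ)
    (ω : Fin r → ℝ) (lam : ℕ → Fin n → ℝ) : Prop :=
  -(Fx A 1 T *ᵥ stackVec lam 1 T) + Phix G 1 T *ᵥ ω = 0 ∧
    Fu B 1 T *ᵥ stackVec lam 1 T + Phiu D 1 T *ᵥ ω = 0

/-- The natural identification of `ℝ^{(l+1)·ι}`-indices with `ℝ^{l·ι} × ℝ^{ι}`-indices. -/
def splitIdx (l : ℕ) (ι : Type*) : Fin (l + 1) × ι → (Fin l × ι) ⊕ ι :=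
  fun ip => if h : (ip.1 : ℕ) < l then Sum.inl (⟨ip.1, h⟩, ip.2) else Sum.inr ip.2

namespace Matrix

theorem rank_lt_card_width_of_mulVec_eq_zero {K m n : Type*} [Field K] [Fintype n]
    (M : Matrix m n K) {v : n → K} (hv : v ≠ 0) (hMv : M *ᵥ v = 0) :
    M.rank < Fintype.card n := by
  have hker : 0 < Module.finrank K (LinearMap.ker M.mulVecLin) :=
    Module.finrank_pos_iff_exists_ne_zero.mpr ⟨⟨v, hMv⟩, by simpa [Subtype.ext_iff] using hv⟩
  have hsum := LinearMap.finrank_range_add_finrank_ker M.mulVecLin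
  rw [Module.finrank_fintype_fun_eq_card] at hsum
  unfold rank
  omega

end Matrix

section RecoveryMatrix

variable (A : ℕ → Matrix (Fin n) (Fin n) ℝ) (B : ℕ → Matrix (Fin n) (Fin m) ℝ)
  (G : ℕ → Matrix (Fin r) (Fin n) ℝ) (D : ℕ → Matrix (Fin r) (Fin m) ℝ) (t l : ℕ)

theorem Fx_blockTriangular : (Fx A t l).BlockTriangular Prod.fst := by
  rintro ⟨i, p⟩ ⟨j, q⟩ (hji : j < i)
  have hj : (j : ℕ) ≠ i + 1 := by have : (j : ℕ) < i := hji; omega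
  simp [Fx, hji.ne', hj]

theorem det_Fx : (Fx A t l).det = 1 := by
  rw [(Fx_blockTriangular A t l).det]
  refine Finset.prod_eq_one fun i _ => ?_
  have hblock : (Fx A t l).toSquareBlock Prod.fst i = 1 := by
    ext ⟨⟨i₁, p⟩, h₁⟩ ⟨⟨i₂, q⟩, h₂⟩
    simp only at h₁ h₂
    subst h₁ h₂
    simp [toSquareBlock, toSquareBlockProp, Fx, one_apply]
  rw [hblock, det_one]

theorem Fx_inv_mulVec_Fx_mulVec (v : Fin l × Fin n → ℝ) :
    (Fx A t l)⁻¹ *ᵥ (Fx A t l *ᵥ v) = v := by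
  rw [mulVec_mulVec, nonsing_inv_mul _ (by simp [det_Fx]), one_mulVec]

theorem Fx_mulVec_stackVec (lam : ℕ → Fin n → ℝ) (i : Fin l) (p : Fin n) :
    (Fx A t l *ᵥ stackVec lam t l) (i, p) =
      lam (t + i) p - if (i : ℕ) + 1 < l then ((A (t + i))ᵀ *ᵥ lam (t + i + 1)) p else 0 := by
  simp only [mulVec, dotProduct, Fx, stackVec, Fintype.sum_prod_type]
  split_ifs with hi
  · have hnext : i ≠ ⟨i + 1, hi⟩ := by simp [Fin.ext_iff]
    rw [Fintype.sum_eq_add i ⟨i + 1, hi⟩ hnext]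
    · simp [hnext, ← add_assoc, sub_eq_add_neg]
    · rintro j ⟨hji, hj⟩
      simp [Ne.symm hji, Fin.ext_iff.not.mp hj]
  · rw [Fintype.sum_eq_single i]
    · simp
    · intro j hji
      have hj : (j : ℕ) ≠ i + 1 := by have := j.isLt; omega
      simp [Ne.symm hji, hj]

theorem Fu_mulVec_stackVec (lam : ℕ → Fin n → ℝ) (i : Fin l) (p : Fin m) :
    (Fu B t l *ᵥ stackVec lam t l) (i, p) = ((B (t + i))ᵀ *ᵥ lam (t + i)) p := by
  simp only [mulVec, dotProduct, Fu, stackVec, Fintype.sum_prod_type]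
  rw [Fintype.sum_eq_single i fun j hji => by simp [Ne.symm hji]]
  simp

theorem Phix_mulVec (ω : Fin r → ℝ) (i : Fin l) (p : Fin n) :
    (Phix G t l *ᵥ ω) (i, p) = ((G (t + i))ᵀ *ᵥ ω) p := rfl

theorem Phiu_mulVec (ω : Fin r → ℝ) (i : Fin l) (p : Fin m) :
    (Phiu D t l *ᵥ ω) (i, p) = ((D (t + i))ᵀ *ᵥ ω) p := rfl

theorem Vm_mulVec (μ : Fin n → ℝ) (i : Fin l) (p : Fin n) :
    (Vm A t l *ᵥ μ) (i, p) = if (i : ℕ) = l - 1 then ((A (t + l - 1))ᵀ *ᵥ μ) p else 0 := by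
  simp only [mulVec, dotProduct, Vm]
  split_ifs <;> simp

theorem Hm_mulVec_sumElim_eq_zero {ω : Fin r → ℝ} {μ : Fin n → ℝ} {x : Fin l × Fin n → ℝ}
    (hstate : Fx A t l *ᵥ x = Phix G t l *ᵥ ω + Vm A t l *ᵥ μ)
    (hstat : Fu B t l *ᵥ x + Phiu D t l *ᵥ ω = 0) :
    Hm A B G D t l *ᵥ Sum.elim ω μ = 0 := calc
  Hm A B G D t l *ᵥ Sum.elim ω μ
      = Fu B t l *ᵥ ((Fx A t l)⁻¹ *ᵥ (Phix G t l *ᵥ ω + Vm A t l *ᵥ μ)) + Phiu D t l *ᵥ ω := by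
    simp only [Hm, H1m, H2m, fromCols_mulVec_sumElim, add_mulVec, mulVec_add, ← mulVec_mulVec]
    abel
  _ = Fu B t l *ᵥ x + Phiu D t l *ᵥ ω := by rw [← hstate, Fx_inv_mulVec_Fx_mulVec]
  _ = 0 := hstat

end RecoveryMatrix

namespace KKT

variable {A : ℕ → Matrix (Fin n) (Fin n) ℝ} {B : ℕ → Matrix (Fin n) (Fin m) ℝ}
  {G : ℕ → Matrix (Fin r) (Fin n) ℝ} {D : ℕ → Matrix (Fin r) (Fin m) ℝ} {T : ℕ}
  {ω : Fin r → ℝ} {lam : ℕ → Fin n → ℝ}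

theorem costate_eq (h : KKT A B G D T ω lam) {k : ℕ} (hk : 1 ≤ k) (hkT : k ≤ T) :
    lam k = (G k)ᵀ *ᵥ ω + (A k)ᵀ *ᵥ (if k + 1 ≤ T then lam (k + 1) else 0) := by
  obtain ⟨i, rfl⟩ : ∃ i, k = 1 + i := ⟨k - 1, by omega⟩
  funext p
  have hrow := congrFun h.1 (⟨i, by omega⟩, p)
  have hnext : i + 1 < T ↔ 1 + i + 1 ≤ T := by omega
  simp only [Pi.add_apply, Pi.neg_apply, Pi.zero_apply, Fx_mulVec_stackVec, Phix_mulVec,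
    hnext] at hrow
  split_ifs at hrow ⊢ <;> simp only [Pi.add_apply, mulVec_zero, Pi.zero_apply] <;> linarith

theorem stationarity (h : KKT A B G D T ω lam) {k : ℕ} (hk : 1 ≤ k) (hkT : k ≤ T) :
    (B k)ᵀ *ᵥ lam k + (D k)ᵀ *ᵥ ω = 0 := by
  obtain ⟨i, rfl⟩ : ∃ i, k = 1 + i := ⟨k - 1, by omega⟩
  funext p
  simpa only [Pi.add_apply, Pi.zero_apply, Fu_mulVec_stackVec, Phiu_mulVec] using
    congrFun h.2 (⟨i, by omega⟩, p)

theorem window_state (h : KKT A B G D T ω lam) {t l : ℕ} (ht : 1 ≤ t) (htl : t + l - 1 ≤ T) :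
    Fx A t l *ᵥ stackVec lam t l =
      Phix G t l *ᵥ ω + Vm A t l *ᵥ (if t + l ≤ T then lam (t + l) else 0) := by
  funext ⟨i, p⟩
  have hi := i.isLt
  rw [Fx_mulVec_stackVec, Pi.add_apply, Phix_mulVec, Vm_mulVec,
    h.costate_eq (k := t + i) (by omega) (by omega)]
  by_cases hlast : (i : ℕ) + 1 < l
  · rw [if_pos (by omega : t + i + 1 ≤ T), if_pos hlast, if_neg (by omega)]
    simp
  · rw [if_neg hlast, if_pos (by omega : (i : ℕ) = l - 1), show t + i + 1 = t + l by omega,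
      show t + l - 1 = t + i by omega]
    simp

theorem window_stationarity (h : KKT A B G D T ω lam) {t l : ℕ} (ht : 1 ≤ t)
    (htl : t + l - 1 ≤ T) :
    Fu B t l *ᵥ stackVec lam t l + Phiu D t l *ᵥ ω = 0 := by
  funext ⟨i, p⟩
  have hi := i.isLt
  simpa only [Pi.add_apply, Pi.zero_apply, Fu_mulVec_stackVec, Phiu_mulVec] using
    congrFun (h.stationarity (k := t + i) (by omega) (by omega)) p

end KKT

theorem recovery_matrix_rank_upper_bound_general (n m r T : ℕ)
    (A : ℕ → Matrix (Fin n) (Fin n) ℝ) (B : ℕ → Matrix (Fin n) (Fin m) ℝ)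
    (G : ℕ → Matrix (Fin r) (Fin n) ℝ) (D : ℕ → Matrix (Fin r) (Fin m) ℝ)
    (ω : Fin r → ℝ) (hω : ω ≠ 0)
    (lam : ℕ → Fin n → ℝ) (hKKT : KKT A B G D T ω lam)
    (t l : ℕ) (ht : 1 ≤ t) (htl : t + l - 1 ≤ T) :
    (Hm A B G D t l).rank ≤ r + n - 1 := by
  have hker := Hm_mulVec_sumElim_eq_zero A B G D t l (hKKT.window_state ht htl)
    (hKKT.window_stationarity ht htl)
  have hne (μ : Fin n → ℝ) : Sum.elim ω μ ≠ 0 :=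
    fun h0 => hω (funext fun q => congrFun h0 (Sum.inl q))
  have hrank := (Hm A B G D t l).rank_lt_card_width_of_mulVec_eq_zero (hne _) hker
  rw [Fintype.card_sum, Fintype.card_fin, Fintype.card_fin] at hrank
  omega

/-- Lemma 3 (rank upper bound): if the full-horizon KKT conditions hold for some nonzero
`ω`, then `rank H(t,l) ≤ r+n−1` for every window. -/
theorem recovery_matrix_rank_upper_bound (n m r T : ℕ) (hn : 0 < n) (hm : 0 < m) (hr : 0 < r) (hT : 1 ≤ T)
    (A : ℕ → Matrix (Fin n) (Fin n) ℝ) (B : ℕ → Matrix (Fin n) (Fin m) ℝ)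
    (G : ℕ → Matrix (Fin r) (Fin n) ℝ) (D : ℕ → Matrix (Fin r) (Fin m) ℝ)
    (hAT : A T = 1)
    (ω : Fin r → ℝ) (hω : ω ≠ 0)
    (lam : ℕ → Fin n → ℝ) (hKKT : KKT A B G D T ω lam)
    (t l : ℕ) (ht : 1 ≤ t) (hl : 1 ≤ l) (htl : t + l - 1 ≤ T) :
    (Hm A B G D t l).rank ≤ r + n - 1 :=
  recovery_matrix_rank_upper_bound_general n m r T A B G D ω hω lam hKKT t l ht htl

end
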